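/- arXiv:1802.06564 — 3 statements merged into one kernel-verified Lean document; each statement's English description precedes it below -/
import Mathlib

section
/- Let F_P = (V_P, E_P) be an r-rooted subtree with Σ_{e∈E_P} c(e) + Σ_{v∉V_P} π(v) ≤ 2·OPT_PCST, and let F_M = (V_M, E_M) be an r-rooted subtree with |V_M| ≥ k and Σ_{e∈E_M} c(e) ≤ 2·OPT_{kMST}. Let F_OUT = (V_OUT, E_OUT) be a spanning tree of the (connected) subgraph G' = (V_P ∪ V_M, E_P ∪ E_M) of minimum edge cost. Then F_OUT is a feasible k-PCST solution and Σ_{e∈E_OUT} c(e) + Σ_{v∉V_OUT} π(v) ≤ 4·OPT. -/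
open Finset

variable {V : Type*}

/-- Total cost of the edges of a subgraph. -/
noncomputable def edgeCost (c : Sym2 V → ℝ) {G : SimpleGraph V} (H : G.Subgraph) : ℝ :=
  ∑ᶠ e ∈ H.edgeSet, c e

/-- Total penalty of the vertices excluded from a subgraph. -/
noncomputable def penaltyCost (π : V → ℝ) {G : SimpleGraph V} (H : G.Subgraph) : ℝ :=
  ∑ᶠ v ∈ H.vertsᶜ, π v

/-- `H` is an `r`-rooted subtree of `G`. -/
def IsRootedSubtree {G : SimpleGraph V} (r : V) (H : G.Subgraph) : Prop :=
  r ∈ H.verts ∧ H.coe.IsTree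

/-- Feasibility for the k-prize-collecting Steiner tree problem. -/
def KPCSTFeasible {G : SimpleGraph V} (r : V) (k : ℕ) (H : G.Subgraph) : Prop :=
  IsRootedSubtree r H ∧ k ≤ H.verts.ncard

/-- The prize-collecting objective: edge cost plus penalties of excluded vertices. -/
noncomputable def pcstObj (c : Sym2 V → ℝ) (π : V → ℝ) {G : SimpleGraph V}
    (H : G.Subgraph) : ℝ :=
  edgeCost c H + penaltyCost π H

/-- `T` is a spanning tree of the subgraph `H`. -/
def IsSpanningTreeOf {G : SimpleGraph V} (T H : G.Subgraph) : Prop :=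
  T ≤ H ∧ T.verts = H.verts ∧ T.coe.IsTree

private lemma fm_mono {α : Type*} {f : α → ℝ} (hf : ∀ x, 0 ≤ f x) {s t : Set α}
    (hst : s ⊆ t) (ht : t.Finite) : ∑ᶠ x ∈ s, f x ≤ ∑ᶠ x ∈ t, f x := by
  have hs := ht.subset hst
  rw [← hs.coe_toFinset, ← ht.coe_toFinset, finsum_mem_coe_finset, finsum_mem_coe_finset]
  exact Finset.sum_le_sum_of_subset_of_nonneg
    (by simpa [Set.Finite.toFinset_subset] using hst.trans ht.coe_toFinset.symm.subset)
    (fun i _ _ => hf i)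

private lemma fm_nonneg {α : Type*} {f : α → ℝ} (hf : ∀ x, 0 ≤ f x) (s : Set α) :
    0 ≤ ∑ᶠ x ∈ s, f x :=
  finsum_nonneg fun i => finsum_nonneg fun _ => hf i

private lemma fm_union_le {α : Type*} [DecidableEq α] {f : α → ℝ} (hf : ∀ x, 0 ≤ f x) {s t : Set α}
    (hs : s.Finite) (ht : t.Finite) :
    ∑ᶠ x ∈ s ∪ t, f x ≤ (∑ᶠ x ∈ s, f x) + ∑ᶠ x ∈ t, f x := by
  rw [← hs.coe_toFinset, ← ht.coe_toFinset, ← Finset.coe_union, finsum_mem_coe_finset,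
    finsum_mem_coe_finset, finsum_mem_coe_finset]
  have h := Finset.sum_union_inter (s₁ := hs.toFinset) (s₂ := ht.toFinset) (f := f)
  have h2 : (0:ℝ) ≤ ∑ x ∈ hs.toFinset ∩ ht.toFinset, f x := Finset.sum_nonneg fun i _ => hf i
  linarith

/-- combining a 2-approximate PCST tree and a 2-approximate k-MST tree
via a minimum spanning tree of their union gives a feasible k-PCST solution of
objective at most 4·OPT. -/
theorem four_approx_kpcst [Fintype V] {G : SimpleGraph V} (hG : G.Connected)
    (c : Sym2 V → ℝ) (π : V → ℝ) (hc : ∀ e, 0 ≤ c e) (hπ : ∀ v, 0 ≤ π v)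
    (r : V) (k : ℕ) (hk : k ≤ Fintype.card V)
    (OPT OPT_PCST OPT_kMST : ℝ)
    (hOPT : IsLeast {x : ℝ | ∃ H : G.Subgraph, KPCSTFeasible r k H ∧ x = pcstObj c π H} OPT)
    (hOPT_PCST : IsLeast {x : ℝ | ∃ H : G.Subgraph, IsRootedSubtree r H ∧ x = pcstObj c π H} OPT_PCST)
    (hOPT_kMST : IsLeast {x : ℝ | ∃ H : G.Subgraph, KPCSTFeasible r k H ∧ x = edgeCost c H} OPT_kMST)
    (FP : G.Subgraph) (hFP : IsRootedSubtree r FP)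
    (hFP2 : pcstObj c π FP ≤ 2 * OPT_PCST)
    (FM : G.Subgraph) (hFM : IsRootedSubtree r FM) (hFMk : k ≤ FM.verts.ncard)
    (hFM2 : edgeCost c FM ≤ 2 * OPT_kMST)
    (T : G.Subgraph) (hT : IsSpanningTreeOf T (FP ⊔ FM))
    (hTmin : ∀ T' : G.Subgraph, IsSpanningTreeOf T' (FP ⊔ FM) → edgeCost c T ≤ edgeCost c T') :
    KPCSTFeasible r k T ∧ pcstObj c π T ≤ 4 * OPT := by
  obtain ⟨hTle, hTverts, hTtree⟩ := hT
  have hsubP : FP.verts ⊆ T.verts := by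
    rw [hTverts, SimpleGraph.Subgraph.verts_sup]; exact Set.subset_union_left
  have hsubM : FM.verts ⊆ T.verts := by
    rw [hTverts, SimpleGraph.Subgraph.verts_sup]; exact Set.subset_union_right
  have hfeas : KPCSTFeasible r k T :=
    ⟨⟨hsubP hFP.1, hTtree⟩, hFMk.trans (Set.ncard_le_ncard hsubM (Set.toFinite _))⟩
  refine ⟨hfeas, ?_⟩
  have hedge : edgeCost c T ≤ edgeCost c FP + edgeCost c FM := by
    have h1 : T.edgeSet ⊆ FP.edgeSet ∪ FM.edgeSet := by
      rw [← SimpleGraph.Subgraph.edgeSet_sup]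
      exact SimpleGraph.Subgraph.edgeSet_mono hTle
    exact (fm_mono hc h1 (Set.toFinite _)).trans
      (by classical exact fm_union_le hc (Set.toFinite _) (Set.toFinite _))
  have hpen : penaltyCost π T ≤ penaltyCost π FP :=
    fm_mono hπ (Set.compl_subset_compl.2 hsubP) (Set.toFinite _)
  obtain ⟨⟨Hs, hHfeas, hHeq⟩, _⟩ := hOPT
  have h1 : OPT_PCST ≤ OPT := hOPT_PCST.2 ⟨Hs, hHfeas.1, hHeq⟩
  have h2 : OPT_kMST ≤ OPT := by
    have hle : OPT_kMST ≤ edgeCost c Hs := hOPT_kMST.2 ⟨Hs, hHfeas, rfl⟩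
    have hp0 : 0 ≤ penaltyCost π Hs := fm_nonneg hπ _
    have : OPT = pcstObj c π Hs := hHeq
    rw [this, pcstObj]; linarith
  have hFPsplit : pcstObj c π FP = edgeCost c FP + penaltyCost π FP := rfl
  rw [pcstObj]
  linarith
end

section
/- Under the hypotheses of the 4-approximation theorem, if additionally there exists an optimal k-PCST solution F* = (V*, E*) with Σ_{e∈E*} c(e) ≤ OPT/2, then the output spanning tree F_OUT satisfies Σ_{e∈E_OUT} c(e) + Σ_{v∉V_OUT} π(v) ≤ 3·OPT. -/
open Finset

variable {V : Type*}

private lemma finsum_mem_mono' {α : Type*} [Fintype α] (f : α → ℝ) {s t : Set α}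
    (h : s ⊆ t) (hf : ∀ x, 0 ≤ f x) : ∑ᶠ x ∈ s, f x ≤ ∑ᶠ x ∈ t, f x := by
  rw [finsum_mem_eq_finite_toFinset_sum _ s.toFinite,
    finsum_mem_eq_finite_toFinset_sum _ t.toFinite]
  exact Finset.sum_le_sum_of_subset_of_nonneg (by simpa using h) (fun i _ _ => hf i)

open Classical in
private lemma finsum_mem_union_le' {α : Type*} [Fintype α] (f : α → ℝ) (s t : Set α)
    (hf : ∀ x, 0 ≤ f x) : ∑ᶠ x ∈ s ∪ t, f x ≤ (∑ᶠ x ∈ s, f x) + ∑ᶠ x ∈ t, f x := by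
  rw [finsum_mem_eq_finite_toFinset_sum _ (s ∪ t).toFinite,
    finsum_mem_eq_finite_toFinset_sum _ s.toFinite,
    finsum_mem_eq_finite_toFinset_sum _ t.toFinite]
  calc ∑ x ∈ (s ∪ t).toFinite.toFinset, f x
      ≤ ∑ x ∈ s.toFinite.toFinset ∪ t.toFinite.toFinset, f x := by
        apply Finset.sum_le_sum_of_subset_of_nonneg ?_ (fun i _ _ => hf i)
        intro x hx; simp at hx ⊢; tauto
    _ ≤ _ := by
        have h1 := Finset.sum_union_inter (s₁ := s.toFinite.toFinset)
          (s₂ := t.toFinite.toFinset) (f := f)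
        have h2 : 0 ≤ ∑ x ∈ s.toFinite.toFinset ∩ t.toFinite.toFinset, f x :=
          Finset.sum_nonneg fun i _ => hf i
        linarith

/-- if some optimal k-PCST solution has edge cost at most OPT/2, the
output of the algorithm has objective at most 3·OPT. -/
theorem three_approx_kpcst [Fintype V] {G : SimpleGraph V} (hG : G.Connected)
    (c : Sym2 V → ℝ) (π : V → ℝ) (hc : ∀ e, 0 ≤ c e) (hπ : ∀ v, 0 ≤ π v)
    (r : V) (k : ℕ) (hk : k ≤ Fintype.card V)
    (OPT OPT_PCST OPT_kMST : ℝ)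
    (hOPT : IsLeast {x : ℝ | ∃ H : G.Subgraph, KPCSTFeasible r k H ∧ x = pcstObj c π H} OPT)
    (hOPT_PCST : IsLeast {x : ℝ | ∃ H : G.Subgraph, IsRootedSubtree r H ∧ x = pcstObj c π H} OPT_PCST)
    (hOPT_kMST : IsLeast {x : ℝ | ∃ H : G.Subgraph, KPCSTFeasible r k H ∧ x = edgeCost c H} OPT_kMST)
    (FP : G.Subgraph) (hFP : IsRootedSubtree r FP)
    (hFP2 : pcstObj c π FP ≤ 2 * OPT_PCST)
    (FM : G.Subgraph) (hFM : IsRootedSubtree r FM) (hFMk : k ≤ FM.verts.ncard)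
    (hFM2 : edgeCost c FM ≤ 2 * OPT_kMST)
    (T : G.Subgraph) (hT : IsSpanningTreeOf T (FP ⊔ FM))
    (hTmin : ∀ T' : G.Subgraph, IsSpanningTreeOf T' (FP ⊔ FM) → edgeCost c T ≤ edgeCost c T')
    (hstar : ∃ Fstar : G.Subgraph, KPCSTFeasible r k Fstar ∧
      (∀ H : G.Subgraph, KPCSTFeasible r k H → pcstObj c π Fstar ≤ pcstObj c π H) ∧
      edgeCost c Fstar ≤ OPT / 2) :
    pcstObj c π T ≤ 3 * OPT := by
  obtain ⟨Fstar, hFs_feas, _, hFs_cost⟩ := hstar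
  -- OPT_kMST ≤ OPT / 2
  have hkM : OPT_kMST ≤ OPT / 2 :=
    le_trans (hOPT_kMST.2 ⟨Fstar, hFs_feas, rfl⟩) hFs_cost
  -- OPT_PCST ≤ OPT
  obtain ⟨H0, hH0feas, hH0eq⟩ := hOPT.1
  have hP : OPT_PCST ≤ OPT := by
    rw [hH0eq]; exact hOPT_PCST.2 ⟨H0, hH0feas.1, rfl⟩
  -- edge cost bound
  have hE : edgeCost c T ≤ edgeCost c FP + edgeCost c FM := by
    have hsub : T.edgeSet ⊆ (FP ⊔ FM).edgeSet :=
      SimpleGraph.Subgraph.edgeSet_mono hT.1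
    calc edgeCost c T ≤ edgeCost c (FP ⊔ FM) := finsum_mem_mono' c hsub hc
      _ ≤ edgeCost c FP + edgeCost c FM := by
          unfold edgeCost
          rw [SimpleGraph.Subgraph.edgeSet_sup]
          exact finsum_mem_union_le' c _ _ hc
  -- penalty bound
  have hPen : penaltyCost π T ≤ penaltyCost π FP := by
    apply finsum_mem_mono' π ?_ hπ
    rw [hT.2.1]
    intro v hv
    simp only [Set.mem_compl_iff] at hv ⊢
    exact fun h => hv (Or.inl h)
  have : pcstObj c π T ≤ pcstObj c π FP + edgeCost c FM := by
    unfold pcstObj at *; linarith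
  calc pcstObj c π T ≤ pcstObj c π FP + edgeCost c FM := this
    _ ≤ 2 * OPT_PCST + 2 * OPT_kMST := by linarith
    _ ≤ 2 * OPT + 2 * (OPT / 2) := by linarith
    _ = 3 * OPT := by ring
end

section
/- Let T_Garg be a tour through at least k vertices including r with cost at most 2·OPT_{kTSP}, and T_GW a tour including r with cost-plus-penalty at most 2·OPT_{PTSP}. In a complete graph whose edge costs satisfy the triangle inequality, merging the two tours at r and shortcutting repeated vertices yields a tour T_OUT through at least k vertices including r whose k-PCTSP objective satisfies cost(T_OUT) + Σ_{v∉V[T_OUT]} π(v) ≤ 2·OPT_{kTSP} + 2·OPT_{PTSP} ≤ 4·OPT, where OPT is the optimal k-PCTSP value. -/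
open Finset

variable {V : Type*}

/-- A tour is represented by the cyclic list of vertices it visits: it must visit
distinct vertices and be nonempty. -/
def IsTour (l : List V) : Prop := l.Nodup ∧ l ≠ []

/-- The cost of the (cyclic) tour given by the list `l`: the sum of the costs of
consecutive edges, including the closing edge back to the start. -/
def tourCost (c : V → V → ℝ) (l : List V) : ℝ :=
  ((l.zip (l.rotate 1)).map fun p => c p.1 p.2).sum

/-- Penalty of the vertices not visited by the tour. -/
def tourPenalty [Fintype V] [DecidableEq V] (π : V → ℝ) (l : List V) : ℝ :=
  ∑ v ∈ Finset.univ \ l.toFinset, π v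

def pathCost (c : V → V → ℝ) : List V → ℝ
  | [] => 0
  | [_] => 0
  | a :: b :: l => c a b + pathCost c (b :: l)

lemma pathCost_eq_zip (c : V → V → ℝ) :
    ∀ l : List V, pathCost c l = ((l.zip l.tail).map fun p => c p.1 p.2).sum
  | [] => by simp [pathCost]
  | [_] => by simp [pathCost]
  | a :: b :: l => by
    rw [pathCost, pathCost_eq_zip c (b :: l)]
    simp [List.zip]

lemma tourCost_eq_pathCost (c : V → V → ℝ) (a : V) (t : List V) :
    tourCost c (a :: t) = pathCost c ((a :: t) ++ [a]) := by
  rw [pathCost_eq_zip, tourCost]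
  congr 1
  rw [List.rotate_cons_succ, List.rotate_zero]
  have h : ((a :: t) ++ [a]).zip ((t ++ [a]) ++ ([] : List V)) =
      (a :: t).zip (t ++ [a]) ++ ([a].zip ([] : List V)) :=
    List.zip_append (by simp)
  simp only [List.append_nil] at h
  simp only [List.cons_append, List.tail]
  rw [show (a :: (t ++ [a])) = (a :: t) ++ [a] by simp]
  rw [h]
  simp

lemma pathCost_append (c : V → V → ℝ) (a : V) :
    ∀ (l m : List V), pathCost c (l ++ a :: m) = pathCost c (l ++ [a]) + pathCost c (a :: m)
  | [], m => by simp [pathCost]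
  | [x], m => by simp [pathCost]
  | x :: y :: l, m => by
    have ih := pathCost_append c a (y :: l) m
    simp only [List.cons_append] at *
    rw [pathCost, pathCost, ih]
    ring

lemma le_pathCost (c : V → V → ℝ) (htri : ∀ u v w, c u w ≤ c u v + c v w)
    (hc0 : ∀ u v, 0 ≤ c u v) (y : V) :
    ∀ (l : List V) (x : V), c x y ≤ pathCost c (x :: l ++ [y])
  | [], x => by simp [pathCost]
  | a :: l, x => by
    simp only [List.cons_append, pathCost]
    calc c x y ≤ c x a + c a y := htri x a y
      _ ≤ c x a + pathCost c (a :: l ++ [y]) := by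
          have := le_pathCost c htri hc0 y l a
          simp only [List.cons_append] at this ⊢
          linarith

lemma pathCost_shortcut (c : V → V → ℝ) (htri : ∀ u v w, c u w ≤ c u v + c v w)
    (hc0 : ∀ u v, 0 ≤ c u v) (y : V) {l' l : List V} (h : l'.Sublist l) :
    ∀ x : V, pathCost c (x :: l' ++ [y]) ≤ pathCost c (x :: l ++ [y]) := by
  induction h with
  | slnil => intro x; simp
  | cons a h ih =>
    intro x
    rename_i l₁ l₂
    have step : pathCost c (x :: l₁ ++ [y]) ≤ c x a + pathCost c (a :: l₁ ++ [y]) := by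
      cases l₁ with
      | nil => simpa [pathCost] using htri x a y
      | cons b l₁ =>
        simp only [List.cons_append, pathCost]
        have := htri x a b
        linarith
    calc pathCost c (x :: l₁ ++ [y]) ≤ c x a + pathCost c (a :: l₁ ++ [y]) := step
      _ ≤ c x a + pathCost c (a :: l₂ ++ [y]) := by linarith [ih a]
      _ = pathCost c (x :: a :: l₂ ++ [y]) := by simp [pathCost]
  | cons_cons a h ih =>
    intro x
    rename_i l₁ l₂
    simp only [List.cons_append, pathCost]
    have := ih a
    simp only [List.cons_append] at this
    linarith

lemma tourCost_append_comm (c : V → V → ℝ) :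
    ∀ l₁ l₂ : List V, tourCost c (l₁ ++ l₂) = tourCost c (l₂ ++ l₁)
  | [], l₂ => by simp
  | l₁, [] => by simp
  | a :: t₁, b :: t₂ => by
    rw [show (a :: t₁) ++ (b :: t₂) = a :: (t₁ ++ b :: t₂) by simp,
        show (b :: t₂) ++ (a :: t₁) = b :: (t₂ ++ a :: t₁) by simp,
        tourCost_eq_pathCost, tourCost_eq_pathCost]
    have h1 : pathCost c ((a :: (t₁ ++ b :: t₂)) ++ [a]) =
        pathCost c ((a :: t₁) ++ [b]) + pathCost c (b :: (t₂ ++ [a])) := by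
      rw [show (a :: (t₁ ++ b :: t₂)) ++ [a] = (a :: t₁) ++ b :: (t₂ ++ [a]) by simp]
      exact pathCost_append c b (a :: t₁) (t₂ ++ [a])
    have h2 : pathCost c ((b :: (t₂ ++ a :: t₁)) ++ [b]) =
        pathCost c ((b :: t₂) ++ [a]) + pathCost c (a :: (t₁ ++ [b])) := by
      rw [show (b :: (t₂ ++ a :: t₁)) ++ [b] = (b :: t₂) ++ a :: (t₁ ++ [b]) by simp]
      exact pathCost_append c a (b :: t₂) (t₁ ++ [b])
    rw [h1, h2]
    simp only [show b :: (t₂ ++ [a]) = (b :: t₂) ++ [a] by simp,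
      show a :: (t₁ ++ [b]) = (a :: t₁) ++ [b] by simp]
    ring


lemma merge_tours [Fintype V] [DecidableEq V]
    (c : V → V → ℝ) (hc0 : ∀ u v, 0 ≤ c u v) (hcs : ∀ u v, c u v = c v u)
    (htri : ∀ u v w, c u w ≤ c u v + c v w)
    (π : V → ℝ) (hπ : ∀ v, 0 ≤ π v)
    (r : V)
    (TGarg : List V) (hTGnd : TGarg.Nodup) (hTGr : r ∈ TGarg)
    (TGW : List V) (hTWnd : TGW.Nodup) (hTWr : r ∈ TGW) :
    ∃ TOUT : List V, TOUT.Nodup ∧ r ∈ TOUT ∧ TGarg.length ≤ TOUT.length ∧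
      TOUT.toFinset = TGarg.toFinset ∪ TGW.toFinset ∧
      tourCost c TOUT + tourPenalty π TOUT ≤
        tourCost c TGarg + tourCost c TGW + tourPenalty π TGW := by
  obtain ⟨s, t, hst⟩ := List.append_of_mem hTGr
  obtain ⟨s', t', hst'⟩ := List.append_of_mem hTWr
  set A : List V := r :: (t ++ s) with hA
  set B : List V := r :: (t' ++ s') with hB
  have hApm : A.Perm TGarg := by
    rw [hst, show A = (r :: t) ++ s from by simp [hA]]
    exact List.perm_append_comm
  have hBpm : B.Perm TGW := by
    rw [hst', show B = (r :: t') ++ s' from by simp [hB]]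
    exact List.perm_append_comm
  set B' : List V := (t' ++ s').filter (fun v => decide (v ∉ A)) with hB'
  have hmemB' : ∀ v, v ∈ B' ↔ v ∈ t' ++ s' ∧ v ∉ A := by
    intro v; simp only [hB', List.mem_filter, decide_eq_true_eq]
  refine ⟨A ++ B', ?_, ?_, ?_, ?_, ?_⟩
  · rw [List.nodup_append]
    refine ⟨hApm.nodup_iff.mpr hTGnd, ?_, ?_⟩
    · exact ((List.filter_sublist).trans (List.sublist_cons_self _ _)).nodup
        (hBpm.nodup_iff.mpr hTWnd)
    · exact fun a ha b hb hab => ((hmemB' b).1 hb).2 (by subst hab; exact ha)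
  · simp [hA]
  · have := hApm.length_eq
    simp only [List.length_append]
    omega
  · ext v
    have hvA : v ∈ A ↔ v ∈ TGarg := hApm.mem_iff
    have hvB : v ∈ B ↔ v ∈ TGW := hBpm.mem_iff
    have hvB2 : v ∈ B ↔ (v = r ∨ v ∈ t' ++ s') := by simp [hB]
    have hrA : r ∈ A := by simp [hA]
    simp only [List.toFinset_append, Finset.mem_union, List.mem_toFinset, hmemB']
    constructor
    · rintro (h | ⟨h, -⟩)
      · exact Or.inl (hvA.mp h)
      · exact Or.inr (hvB.mp (hvB2.mpr (Or.inr h)))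
    · rintro (h | h)
      · exact Or.inl (hvA.mpr h)
      · rcases hvB2.mp (hvB.mpr h) with h' | h'
        · exact Or.inl (h' ▸ hrA)
        · by_cases hvA' : v ∈ A
          · exact Or.inl hvA'
          · exact Or.inr ⟨h', hvA'⟩
  · -- cost + penalty bound
    have hAc : tourCost c A = tourCost c TGarg := by
      rw [hst, show A = (r :: t) ++ s from by simp [hA]]
      exact tourCost_append_comm c _ _
    have hBc : tourCost c B = tourCost c TGW := by
      rw [hst', show B = (r :: t') ++ s' from by simp [hB]]
      exact tourCost_append_comm c _ _
    have hsub : ((t ++ s) ++ B').Sublist ((t ++ s) ++ (r :: (t' ++ s'))) :=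
      List.Sublist.append_left
        ((List.filter_sublist).trans (List.sublist_cons_self _ _)) _
    have hcost : tourCost c (A ++ B') ≤ tourCost c A + tourCost c B := by
      have h1 : tourCost c (A ++ B') = pathCost c (r :: ((t ++ s) ++ B') ++ [r]) := by
        rw [show A ++ B' = r :: ((t ++ s) ++ B') from by simp [hA],
          tourCost_eq_pathCost]
      have h2 := pathCost_shortcut c htri hc0 r hsub r
      have h3 : pathCost c (r :: ((t ++ s) ++ r :: (t' ++ s')) ++ [r]) =
          pathCost c ((r :: (t ++ s)) ++ [r]) + pathCost c ((r :: (t' ++ s')) ++ [r]) := by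
        rw [show r :: ((t ++ s) ++ r :: (t' ++ s')) ++ [r] =
          (r :: (t ++ s)) ++ r :: ((t' ++ s') ++ [r]) from by simp,
          pathCost_append c r (r :: (t ++ s)) ((t' ++ s') ++ [r])]
        simp
      rw [h1, tourCost_eq_pathCost c r (t ++ s), tourCost_eq_pathCost c r (t' ++ s')]
      calc pathCost c (r :: ((t ++ s) ++ B') ++ [r])
          ≤ pathCost c (r :: ((t ++ s) ++ r :: (t' ++ s')) ++ [r]) := h2
        _ = _ := h3
    have hsubW : TGW.toFinset ⊆ (A ++ B').toFinset := by
      intro v hv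
      simp only [List.mem_toFinset] at hv
      have : v ∈ B := hBpm.mem_iff.mpr hv
      rcases (show v = r ∨ v ∈ t' ++ s' from by simpa [hB] using this) with h' | h'
      · simp [h', hA]
      · by_cases hvA' : v ∈ A
        · simp [List.mem_toFinset, List.mem_append, hvA']
        · simp only [List.toFinset_append, Finset.mem_union, List.mem_toFinset]
          exact Or.inr ((hmemB' v).mpr ⟨h', hvA'⟩)
    have hpen : tourPenalty π (A ++ B') ≤ tourPenalty π TGW :=
      Finset.sum_le_sum_of_subset_of_nonneg
        (Finset.sdiff_subset_sdiff (Finset.Subset.refl _) hsubW)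
        (fun v _ _ => hπ v)
    linarith


/-- merging a 2-approximate k-TSP tour and a 2-approximate PTSP tour at
the common root and shortcutting yields a tour visiting at least k vertices whose
k-PCTSP objective is at most 2·OPT_kTSP + 2·OPT_PTSP ≤ 4·OPT. -/
theorem four_approx_kpctsp [Fintype V] [DecidableEq V]
    (c : V → V → ℝ) (hc0 : ∀ u v, 0 ≤ c u v) (hcs : ∀ u v, c u v = c v u)
    (htri : ∀ u v w, c u w ≤ c u v + c v w)
    (π : V → ℝ) (hπ : ∀ v, 0 ≤ π v)
    (r : V) (k : ℕ) (hk : k ≤ Fintype.card V)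
    (OPTkTSP OPTPTSP OPT : ℝ)
    (hkTSP : IsLeast {x : ℝ | ∃ l : List V, IsTour l ∧ r ∈ l ∧ k ≤ l.length ∧
        x = tourCost c l} OPTkTSP)
    (hPTSP : IsLeast {x : ℝ | ∃ l : List V, IsTour l ∧ r ∈ l ∧
        x = tourCost c l + tourPenalty π l} OPTPTSP)
    (hOPT : IsLeast {x : ℝ | ∃ l : List V, IsTour l ∧ r ∈ l ∧ k ≤ l.length ∧
        x = tourCost c l + tourPenalty π l} OPT)
    (TGarg : List V) (hTG : IsTour TGarg) (hTGr : r ∈ TGarg) (hTGk : k ≤ TGarg.length)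
    (hTGcost : tourCost c TGarg ≤ 2 * OPTkTSP)
    (TGW : List V) (hTW : IsTour TGW) (hTWr : r ∈ TGW)
    (hTWcost : tourCost c TGW + tourPenalty π TGW ≤ 2 * OPTPTSP) :
    ∃ TOUT : List V, IsTour TOUT ∧ r ∈ TOUT ∧ k ≤ TOUT.length ∧
      TOUT.toFinset = TGarg.toFinset ∪ TGW.toFinset ∧
      tourCost c TOUT + tourPenalty π TOUT ≤ 2 * OPTkTSP + 2 * OPTPTSP ∧
      2 * OPTkTSP + 2 * OPTPTSP ≤ 4 * OPT := by
  obtain ⟨hTGnd, -⟩ := hTG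
  obtain ⟨hTWnd, -⟩ := hTW
  obtain ⟨TOUT, hnd, hr, hlen, hfin, hbound⟩ :=
    merge_tours c hc0 hcs htri π hπ r TGarg hTGnd hTGr TGW hTWnd hTWr
  obtain ⟨⟨l0, hl0t, hl0r, hl0k, hl0e⟩, -⟩ := hOPT
  have h1 : OPTkTSP ≤ tourCost c l0 := hkTSP.2 ⟨l0, hl0t, hl0r, hl0k, rfl⟩
  have h2 : OPTPTSP ≤ tourCost c l0 + tourPenalty π l0 := hPTSP.2 ⟨l0, hl0t, hl0r, rfl⟩
  have h3 : (0:ℝ) ≤ tourPenalty π l0 := Finset.sum_nonneg fun v _ => hπ v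
  exact ⟨TOUT, ⟨hnd, List.ne_nil_of_mem hr⟩, hr, le_trans hTGk hlen, hfin,
    by linarith, by linarith⟩
end
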